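/- The WDVV associativity equations hold for the potential F(t_1,t_2,t_3,t_4) = (1/2)t_1²t_4 + (1/2)t_1t_2t_3 − (1/48)t_2²t_3² + (1/1440)t_2t_3⁵ − (1/36288)t_3⁸ + t_2t_3e^{t_4} + (1/6)t_3⁴e^{t_4} + (1/2)e^{2t_4} + (1/48)t_2³/t_3: namely, for all indices i,j,k,m ∈ {1,2,3,4}, Σ_{λ,μ} F_{ijλ} η^{λμ} F_{μkm} = Σ_{λ,μ} F_{kjλ} η^{λμ} F_{μim}, where F_{abc} = ∂³F/∂t_a∂t_b∂t_c and (η^{λμ}) is the inverse of the matrix with nonzero entries η_{14} = η_{41} = 1, η_{23} = η_{32} = 1/2. -/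

import Mathlib

set_option maxHeartbeats 0
open Topology Filter

/-- The Frobenius potential of `W̃^{(1)}(C_3)` as a function on `ℝ⁴`. -/
noncomputable def F3v (t : Fin 4 → ℝ) : ℝ :=
  1/2 * (t 0) ^ 2 * t 3 + 1/2 * t 0 * t 1 * t 2 - 1/48 * (t 1) ^ 2 * (t 2) ^ 2
  + 1/1440 * t 1 * (t 2) ^ 5 - 1/36288 * (t 2) ^ 8 + t 1 * t 2 * Real.exp (t 3)
  + 1/6 * (t 2) ^ 4 * Real.exp (t 3) + 1/2 * Real.exp (2 * t 3)
  + 1/48 * (t 1) ^ 3 / t 2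


noncomputable def P1 : Fin 4 → (Fin 4 → ℝ) → ℝ
  | 0 => fun y => y 0 * y 3 + 1/2 * y 1 * y 2
  | 1 => fun y => 1/2 * y 0 * y 2 - 1/24 * y 1 * y 2 ^ 2 + 1/1440 * y 2 ^ 5
      + y 2 * Real.exp (y 3) + 1/16 * y 1 ^ 2 * (y 2)⁻¹
  | 2 => fun y => 1/2 * y 0 * y 1 - 1/24 * y 1 ^ 2 * y 2 + 1/288 * y 1 * y 2 ^ 4
      - 1/4536 * y 2 ^ 7 + y 1 * Real.exp (y 3) + 2/3 * y 2 ^ 3 * Real.exp (y 3)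
      - 1/48 * y 1 ^ 3 * ((y 2) ^ 2)⁻¹
  | 3 => fun y => 1/2 * y 0 ^ 2 + y 1 * y 2 * Real.exp (y 3) + 1/6 * y 2 ^ 4 * Real.exp (y 3)
      + Real.exp (y 3) ^ 2

lemma exp2mul (x : ℝ) : Real.exp (2 * x) = Real.exp x ^ 2 := by
  rw [two_mul, Real.exp_add, sq]

lemma L1 (y : Fin 4 → ℝ) (hy : y 2 ≠ 0) (c : Fin 4) :
    fderiv ℝ F3v y (Pi.single c 1) = P1 c y := by
  have h0 := hasFDerivAt_apply (𝕜 := ℝ) (0 : Fin 4) y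
  have h1 := hasFDerivAt_apply (𝕜 := ℝ) (1 : Fin 4) y
  have h2 := hasFDerivAt_apply (𝕜 := ℝ) (2 : Fin 4) y
  have h3 := hasFDerivAt_apply (𝕜 := ℝ) (3 : Fin 4) y
  have hinv := (hasDerivAt_inv hy).comp_hasFDerivAt y h2
  have hD := (((((((((((hasDerivAt_pow 2 (y 0)).comp_hasFDerivAt y h0).const_mul
        (1/2)).mul h3).add
        (((h0.const_mul (1/2)).mul h1).mul h2)).sub
        ((((hasDerivAt_pow 2 (y 1)).comp_hasFDerivAt y h1).const_mul (1/48)).mul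
          ((hasDerivAt_pow 2 (y 2)).comp_hasFDerivAt y h2))).add
        ((h1.const_mul (1/1440)).mul ((hasDerivAt_pow 5 (y 2)).comp_hasFDerivAt y h2))).sub
        (((hasDerivAt_pow 8 (y 2)).comp_hasFDerivAt y h2).const_mul (1/36288))).add
        ((h1.mul h2).mul h3.exp)).add
        ((((hasDerivAt_pow 4 (y 2)).comp_hasFDerivAt y h2).const_mul (1/6)).mul h3.exp)).add
        (((h3.const_mul 2).exp).const_mul (1/2))).add
        ((((hasDerivAt_pow 3 (y 1)).comp_hasFDerivAt y h1).const_mul (1/48)).mul hinv)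
  have hDF := hD.congr_of_eventuallyEq (f₁ := F3v)
    (Filter.Eventually.of_forall fun t => by simp [F3v, div_eq_mul_inv, Function.comp])
  rw [hDF.fderiv]
  fin_cases c <;>
    simp [P1, ContinuousLinearMap.add_apply, ContinuousLinearMap.sub_apply,
      ContinuousLinearMap.smul_apply, ContinuousLinearMap.proj_apply,
      Pi.single_apply, exp2mul, smul_eq_mul] <;>
    field_simp <;> ring

lemma openU : IsOpen {z : Fin 4 → ℝ | z 2 ≠ 0} :=
  (isClosed_eq (continuous_apply 2) continuous_const).isOpen_compl

lemma contF (y : Fin 4 → ℝ) (hy : y 2 ≠ 0) : ContDiffAt ℝ ⊤ F3v y := by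
  unfold F3v
  fun_prop (disch := assumption)

lemma dapp {W : Type*} [NormedAddCommGroup W] [NormedSpace ℝ W]
    {G : (Fin 4 → ℝ) → (Fin 4 → ℝ) →L[ℝ] W} {y v : Fin 4 → ℝ}
    (h : DifferentiableAt ℝ G y) (w : Fin 4 → ℝ) :
    fderiv ℝ (fun z => G z w) y v = fderiv ℝ G y v w := by
  rw [fderiv_clm_apply h (differentiableAt_const w)]; simp

noncomputable def Q2 : Fin 4 → Fin 4 → (Fin 4 → ℝ) → ℝ
  | 0, 0 => fun y => y 3
  | 0, 1 => fun y => 1/2 * y 2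
  | 0, 2 => fun y => 1/2 * y 1
  | 0, 3 => fun y => y 0
  | 1, 1 => fun y => -(1/24) * y 2 ^ 2 + 1/8 * y 1 * (y 2)⁻¹
  | 1, 2 => fun y => 1/2 * y 0 - 1/12 * y 1 * y 2 + 1/288 * y 2 ^ 4 + Real.exp (y 3)
      - 1/16 * y 1 ^ 2 * ((y 2) ^ 2)⁻¹
  | 1, 3 => fun y => y 2 * Real.exp (y 3)
  | 2, 2 => fun y => -(1/24) * y 1 ^ 2 + 1/72 * y 1 * y 2 ^ 3 - 1/648 * y 2 ^ 6
      + 2 * y 2 ^ 2 * Real.exp (y 3) + 1/24 * y 1 ^ 3 * ((y 2) ^ 3)⁻¹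
  | 2, 3 => fun y => y 1 * Real.exp (y 3) + 2/3 * y 2 ^ 3 * Real.exp (y 3)
  | 3, 3 => fun y => y 1 * y 2 * Real.exp (y 3) + 1/6 * y 2 ^ 4 * Real.exp (y 3)
      + 2 * Real.exp (y 3) ^ 2
  | _, _ => fun _ => 0

noncomputable def P2 : Fin 4 → Fin 4 → (Fin 4 → ℝ) → ℝ
  | 0, 0 => Q2 0 0
  | 0, 1 => Q2 0 1
  | 0, 2 => Q2 0 2
  | 0, 3 => Q2 0 3
  | 1, 0 => Q2 0 1
  | 1, 1 => Q2 1 1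
  | 1, 2 => Q2 1 2
  | 1, 3 => Q2 1 3
  | 2, 0 => Q2 0 2
  | 2, 1 => Q2 1 2
  | 2, 2 => Q2 2 2
  | 2, 3 => Q2 2 3
  | 3, 0 => Q2 0 3
  | 3, 1 => Q2 1 3
  | 3, 2 => Q2 2 3
  | 3, 3 => Q2 3 3

noncomputable def Q3 : Fin 4 → Fin 4 → Fin 4 → (Fin 4 → ℝ) → ℝ
  | 0, 0, 3 => fun _ => 1
  | 0, 1, 2 => fun _ => 1/2
  | 1, 1, 1 => fun y => 1/8 * (y 2)⁻¹
  | 1, 1, 2 => fun y => -(1/12) * y 2 - 1/8 * y 1 * ((y 2) ^ 2)⁻¹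
  | 1, 2, 2 => fun y => -(1/12) * y 1 + 1/72 * y 2 ^ 3 + 1/8 * y 1 ^ 2 * ((y 2) ^ 3)⁻¹
  | 1, 2, 3 => fun y => Real.exp (y 3)
  | 1, 3, 3 => fun y => y 2 * Real.exp (y 3)
  | 2, 2, 2 => fun y => 1/24 * y 1 * y 2 ^ 2 - 1/108 * y 2 ^ 5 + 4 * y 2 * Real.exp (y 3)
      - 1/8 * y 1 ^ 3 * ((y 2) ^ 4)⁻¹
  | 2, 2, 3 => fun y => 2 * y 2 ^ 2 * Real.exp (y 3)
  | 2, 3, 3 => fun y => y 1 * Real.exp (y 3) + 2/3 * y 2 ^ 3 * Real.exp (y 3)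
  | 3, 3, 3 => fun y => y 1 * y 2 * Real.exp (y 3) + 1/6 * y 2 ^ 4 * Real.exp (y 3)
      + 4 * Real.exp (y 3) ^ 2
  | _, _, _ => fun _ => 0

noncomputable def P3 : Fin 4 → Fin 4 → Fin 4 → (Fin 4 → ℝ) → ℝ
  | 0, 0, 0 => Q3 0 0 0
  | 0, 0, 1 => Q3 0 0 1
  | 0, 0, 2 => Q3 0 0 2
  | 0, 0, 3 => Q3 0 0 3
  | 0, 1, 0 => Q3 0 0 1
  | 0, 1, 1 => Q3 0 1 1
  | 0, 1, 2 => Q3 0 1 2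
  | 0, 1, 3 => Q3 0 1 3
  | 0, 2, 0 => Q3 0 0 2
  | 0, 2, 1 => Q3 0 1 2
  | 0, 2, 2 => Q3 0 2 2
  | 0, 2, 3 => Q3 0 2 3
  | 0, 3, 0 => Q3 0 0 3
  | 0, 3, 1 => Q3 0 1 3
  | 0, 3, 2 => Q3 0 2 3
  | 0, 3, 3 => Q3 0 3 3
  | 1, 0, 0 => Q3 0 0 1
  | 1, 0, 1 => Q3 0 1 1
  | 1, 0, 2 => Q3 0 1 2
  | 1, 0, 3 => Q3 0 1 3
  | 1, 1, 0 => Q3 0 1 1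
  | 1, 1, 1 => Q3 1 1 1
  | 1, 1, 2 => Q3 1 1 2
  | 1, 1, 3 => Q3 1 1 3
  | 1, 2, 0 => Q3 0 1 2
  | 1, 2, 1 => Q3 1 1 2
  | 1, 2, 2 => Q3 1 2 2
  | 1, 2, 3 => Q3 1 2 3
  | 1, 3, 0 => Q3 0 1 3
  | 1, 3, 1 => Q3 1 1 3
  | 1, 3, 2 => Q3 1 2 3
  | 1, 3, 3 => Q3 1 3 3
  | 2, 0, 0 => Q3 0 0 2
  | 2, 0, 1 => Q3 0 1 2
  | 2, 0, 2 => Q3 0 2 2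
  | 2, 0, 3 => Q3 0 2 3
  | 2, 1, 0 => Q3 0 1 2
  | 2, 1, 1 => Q3 1 1 2
  | 2, 1, 2 => Q3 1 2 2
  | 2, 1, 3 => Q3 1 2 3
  | 2, 2, 0 => Q3 0 2 2
  | 2, 2, 1 => Q3 1 2 2
  | 2, 2, 2 => Q3 2 2 2
  | 2, 2, 3 => Q3 2 2 3
  | 2, 3, 0 => Q3 0 2 3
  | 2, 3, 1 => Q3 1 2 3
  | 2, 3, 2 => Q3 2 2 3
  | 2, 3, 3 => Q3 2 3 3
  | 3, 0, 0 => Q3 0 0 3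
  | 3, 0, 1 => Q3 0 1 3
  | 3, 0, 2 => Q3 0 2 3
  | 3, 0, 3 => Q3 0 3 3
  | 3, 1, 0 => Q3 0 1 3
  | 3, 1, 1 => Q3 1 1 3
  | 3, 1, 2 => Q3 1 2 3
  | 3, 1, 3 => Q3 1 3 3
  | 3, 2, 0 => Q3 0 2 3
  | 3, 2, 1 => Q3 1 2 3
  | 3, 2, 2 => Q3 2 2 3
  | 3, 2, 3 => Q3 2 3 3
  | 3, 3, 0 => Q3 0 3 3
  | 3, 3, 1 => Q3 1 3 3
  | 3, 3, 2 => Q3 2 3 3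
  | 3, 3, 3 => Q3 3 3 3

lemma L2 (y : Fin 4 → ℝ) (hy : y 2 ≠ 0) (b c : Fin 4) :
    fderiv ℝ (fderiv ℝ F3v) y (Pi.single b 1) (Pi.single c 1) = P2 b c y := by
  have hC := contF y hy
  have hd1 : DifferentiableAt ℝ (fderiv ℝ F3v) y :=
    (hC.fderiv_right (m := 1) le_top).differentiableAt one_ne_zero
  rw [← dapp hd1 (Pi.single c 1)]
  have hee : (fun z => fderiv ℝ F3v z (Pi.single c 1)) =ᶠ[𝓝 y] P1 c := by
    filter_upwards [openU.mem_nhds hy] with z hz using L1 z hz c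
  rw [hee.fderiv_eq]
  have h0 := hasFDerivAt_apply (𝕜 := ℝ) (0 : Fin 4) y
  have h1 := hasFDerivAt_apply (𝕜 := ℝ) (1 : Fin 4) y
  have h2 := hasFDerivAt_apply (𝕜 := ℝ) (2 : Fin 4) y
  have h3 := hasFDerivAt_apply (𝕜 := ℝ) (3 : Fin 4) y
  have hinv := (hasDerivAt_inv hy).comp_hasFDerivAt y h2
  have hinv2 := (hasDerivAt_inv (pow_ne_zero 2 hy)).comp_hasFDerivAt y
    (by exact (hasDerivAt_pow 2 (y 2)).comp_hasFDerivAt y h2)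
  fin_cases c
  · show fderiv ℝ (P1 0) y (Pi.single b 1) = P2 b 0 y
    have hD := (h0.mul h3).add ((h1.const_mul (1/2)).mul h2)
    have hDF := hD.congr_of_eventuallyEq (f₁ := P1 0)
      (Filter.Eventually.of_forall fun t => by simp [P1])
    rw [hDF.fderiv]
    fin_cases b <;>
      simp [P2, Q2, ContinuousLinearMap.add_apply, ContinuousLinearMap.sub_apply,
        ContinuousLinearMap.smul_apply, ContinuousLinearMap.proj_apply,
        Pi.single_apply, smul_eq_mul] <;> (try field_simp) <;> (try ring)
  · show fderiv ℝ (P1 1) y (Pi.single b 1) = P2 b 1 y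
    have hD := (((((h0.const_mul (1/2)).mul h2).sub
      ((h1.const_mul (1/24)).mul ((hasDerivAt_pow 2 (y 2)).comp_hasFDerivAt y h2))).add
      (((hasDerivAt_pow 5 (y 2)).comp_hasFDerivAt y h2).const_mul (1/1440))).add
      (h2.mul h3.exp)).add
      ((((hasDerivAt_pow 2 (y 1)).comp_hasFDerivAt y h1).const_mul (1/16)).mul hinv)
    have hDF := hD.congr_of_eventuallyEq (f₁ := P1 1)
      (Filter.Eventually.of_forall fun t => by simp [P1])
    rw [hDF.fderiv]
    fin_cases b <;>
      simp [P2, Q2, ContinuousLinearMap.add_apply, ContinuousLinearMap.sub_apply,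
        ContinuousLinearMap.smul_apply, ContinuousLinearMap.proj_apply,
        Pi.single_apply, smul_eq_mul] <;> (try field_simp) <;> (try ring)
  · show fderiv ℝ (P1 2) y (Pi.single b 1) = P2 b 2 y
    have hD := (((((((h0.const_mul (1/2)).mul h1).sub
      ((((hasDerivAt_pow 2 (y 1)).comp_hasFDerivAt y h1).const_mul (1/24)).mul h2)).add
      ((h1.const_mul (1/288)).mul ((hasDerivAt_pow 4 (y 2)).comp_hasFDerivAt y h2))).sub
      (((hasDerivAt_pow 7 (y 2)).comp_hasFDerivAt y h2).const_mul (1/4536))).add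
      (h1.mul h3.exp)).add
      ((((hasDerivAt_pow 3 (y 2)).comp_hasFDerivAt y h2).const_mul (2/3)).mul h3.exp)).sub
      ((((hasDerivAt_pow 3 (y 1)).comp_hasFDerivAt y h1).const_mul (1/48)).mul hinv2)
    have hDF := hD.congr_of_eventuallyEq (f₁ := P1 2)
      (Filter.Eventually.of_forall fun t => by simp [P1])
    rw [hDF.fderiv]
    fin_cases b <;>
      simp [P2, Q2, ContinuousLinearMap.add_apply, ContinuousLinearMap.sub_apply,
        ContinuousLinearMap.smul_apply, ContinuousLinearMap.proj_apply,
        Pi.single_apply, smul_eq_mul] <;> (try field_simp) <;> (try ring)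
  · show fderiv ℝ (P1 3) y (Pi.single b 1) = P2 b 3 y
    have hD := (((((hasDerivAt_pow 2 (y 0)).comp_hasFDerivAt y h0).const_mul (1/2)).add
      ((h1.mul h2).mul h3.exp)).add
      ((((hasDerivAt_pow 4 (y 2)).comp_hasFDerivAt y h2).const_mul (1/6)).mul h3.exp)).add
      ((hasDerivAt_pow 2 (Real.exp (y 3))).comp_hasFDerivAt y h3.exp)
    have hDF := hD.congr_of_eventuallyEq (f₁ := P1 3)
      (Filter.Eventually.of_forall fun t => by simp [P1])
    rw [hDF.fderiv]
    fin_cases b <;>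
      simp [P2, Q2, ContinuousLinearMap.add_apply, ContinuousLinearMap.sub_apply,
        ContinuousLinearMap.smul_apply, ContinuousLinearMap.proj_apply,
        Pi.single_apply, smul_eq_mul] <;> (try field_simp) <;> (try ring)


lemma L3 (y : Fin 4 → ℝ) (hy : y 2 ≠ 0) (a b c : Fin 4) :
    fderiv ℝ (fderiv ℝ (fderiv ℝ F3v)) y (Pi.single a 1) (Pi.single b 1) (Pi.single c 1)
      = P3 a b c y := by
  have hC := contF y hy
  have hd2 : DifferentiableAt ℝ (fderiv ℝ (fderiv ℝ F3v)) y :=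
    ((hC.fderiv_right (m := ⊤) le_top).fderiv_right (m := 1) le_top).differentiableAt one_ne_zero
  rw [← dapp hd2 (Pi.single b 1), ← dapp (hd2.clm_apply (differentiableAt_const _)) (Pi.single c 1)]
  have hee : (fun z => fderiv ℝ (fderiv ℝ F3v) z (Pi.single b 1) (Pi.single c 1)) =ᶠ[𝓝 y] P2 b c := by
    filter_upwards [openU.mem_nhds hy] with z hz using L2 z hz b c
  rw [hee.fderiv_eq]
  have h0 := hasFDerivAt_apply (𝕜 := ℝ) (0 : Fin 4) y
  have h1 := hasFDerivAt_apply (𝕜 := ℝ) (1 : Fin 4) y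
  have h2 := hasFDerivAt_apply (𝕜 := ℝ) (2 : Fin 4) y
  have h3 := hasFDerivAt_apply (𝕜 := ℝ) (3 : Fin 4) y
  have hinv := (hasDerivAt_inv hy).comp_hasFDerivAt y h2
  have hinv2 := (hasDerivAt_inv (pow_ne_zero 2 hy)).comp_hasFDerivAt y
    (by exact (hasDerivAt_pow 2 (y 2)).comp_hasFDerivAt y h2)
  have hinv3 := (hasDerivAt_inv (pow_ne_zero 3 hy)).comp_hasFDerivAt y
    (by exact (hasDerivAt_pow 3 (y 2)).comp_hasFDerivAt y h2)
  fin_cases b <;> fin_cases c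
  · show fderiv ℝ (P2 0 0) y (Pi.single a 1) = P3 a 0 0 y
    have hD := h3
    have hDF := hD.congr_of_eventuallyEq (f₁ := P2 0 0)
      (Filter.Eventually.of_forall fun t => by simp [P2, Q2])
    rw [hDF.fderiv]
    fin_cases a <;>
      simp [P3, Q3, ContinuousLinearMap.add_apply, ContinuousLinearMap.sub_apply,
        ContinuousLinearMap.smul_apply, ContinuousLinearMap.proj_apply,
        Pi.single_apply, smul_eq_mul] <;> (try field_simp) <;> (try ring)
  · show fderiv ℝ (P2 0 1) y (Pi.single a 1) = P3 a 0 1 y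
    have hD := h2.const_mul (1/2)
    have hDF := hD.congr_of_eventuallyEq (f₁ := P2 0 1)
      (Filter.Eventually.of_forall fun t => by simp [P2, Q2])
    rw [hDF.fderiv]
    fin_cases a <;>
      simp [P3, Q3, ContinuousLinearMap.add_apply, ContinuousLinearMap.sub_apply,
        ContinuousLinearMap.smul_apply, ContinuousLinearMap.proj_apply,
        Pi.single_apply, smul_eq_mul] <;> (try field_simp) <;> (try ring)
  · show fderiv ℝ (P2 0 2) y (Pi.single a 1) = P3 a 0 2 y
    have hD := h1.const_mul (1/2)
    have hDF := hD.congr_of_eventuallyEq (f₁ := P2 0 2)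
      (Filter.Eventually.of_forall fun t => by simp [P2, Q2])
    rw [hDF.fderiv]
    fin_cases a <;>
      simp [P3, Q3, ContinuousLinearMap.add_apply, ContinuousLinearMap.sub_apply,
        ContinuousLinearMap.smul_apply, ContinuousLinearMap.proj_apply,
        Pi.single_apply, smul_eq_mul] <;> (try field_simp) <;> (try ring)
  · show fderiv ℝ (P2 0 3) y (Pi.single a 1) = P3 a 0 3 y
    have hD := h0
    have hDF := hD.congr_of_eventuallyEq (f₁ := P2 0 3)
      (Filter.Eventually.of_forall fun t => by simp [P2, Q2])
    rw [hDF.fderiv]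
    fin_cases a <;>
      simp [P3, Q3, ContinuousLinearMap.add_apply, ContinuousLinearMap.sub_apply,
        ContinuousLinearMap.smul_apply, ContinuousLinearMap.proj_apply,
        Pi.single_apply, smul_eq_mul] <;> (try field_simp) <;> (try ring)
  · show fderiv ℝ (P2 1 0) y (Pi.single a 1) = P3 a 1 0 y
    have hD := h2.const_mul (1/2)
    have hDF := hD.congr_of_eventuallyEq (f₁ := P2 1 0)
      (Filter.Eventually.of_forall fun t => by simp [P2, Q2])
    rw [hDF.fderiv]
    fin_cases a <;>
      simp [P3, Q3, ContinuousLinearMap.add_apply, ContinuousLinearMap.sub_apply,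
        ContinuousLinearMap.smul_apply, ContinuousLinearMap.proj_apply,
        Pi.single_apply, smul_eq_mul] <;> (try field_simp) <;> (try ring)
  · show fderiv ℝ (P2 1 1) y (Pi.single a 1) = P3 a 1 1 y
    have hD := (((hasDerivAt_pow 2 (y 2)).comp_hasFDerivAt y h2).const_mul (-(1/24))).add ((h1.const_mul (1/8)).mul hinv)
    have hDF := hD.congr_of_eventuallyEq (f₁ := P2 1 1)
      (Filter.Eventually.of_forall fun t => by simp [P2, Q2])
    rw [hDF.fderiv]
    fin_cases a <;>
      simp [P3, Q3, ContinuousLinearMap.add_apply, ContinuousLinearMap.sub_apply,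
        ContinuousLinearMap.smul_apply, ContinuousLinearMap.proj_apply,
        Pi.single_apply, smul_eq_mul] <;> (try field_simp) <;> (try ring)
  · show fderiv ℝ (P2 1 2) y (Pi.single a 1) = P3 a 1 2 y
    have hD := ((((h0.const_mul (1/2)).sub ((h1.const_mul (1/12)).mul h2)).add (((hasDerivAt_pow 4 (y 2)).comp_hasFDerivAt y h2).const_mul (1/288))).add h3.exp).sub ((((hasDerivAt_pow 2 (y 1)).comp_hasFDerivAt y h1).const_mul (1/16)).mul hinv2)
    have hDF := hD.congr_of_eventuallyEq (f₁ := P2 1 2)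
      (Filter.Eventually.of_forall fun t => by simp [P2, Q2])
    rw [hDF.fderiv]
    fin_cases a <;>
      simp [P3, Q3, ContinuousLinearMap.add_apply, ContinuousLinearMap.sub_apply,
        ContinuousLinearMap.smul_apply, ContinuousLinearMap.proj_apply,
        Pi.single_apply, smul_eq_mul] <;> (try field_simp) <;> (try ring)
  · show fderiv ℝ (P2 1 3) y (Pi.single a 1) = P3 a 1 3 y
    have hD := h2.mul h3.exp
    have hDF := hD.congr_of_eventuallyEq (f₁ := P2 1 3)
      (Filter.Eventually.of_forall fun t => by simp [P2, Q2])
    rw [hDF.fderiv]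
    fin_cases a <;>
      simp [P3, Q3, ContinuousLinearMap.add_apply, ContinuousLinearMap.sub_apply,
        ContinuousLinearMap.smul_apply, ContinuousLinearMap.proj_apply,
        Pi.single_apply, smul_eq_mul] <;> (try field_simp) <;> (try ring)
  · show fderiv ℝ (P2 2 0) y (Pi.single a 1) = P3 a 2 0 y
    have hD := h1.const_mul (1/2)
    have hDF := hD.congr_of_eventuallyEq (f₁ := P2 2 0)
      (Filter.Eventually.of_forall fun t => by simp [P2, Q2])
    rw [hDF.fderiv]
    fin_cases a <;>
      simp [P3, Q3, ContinuousLinearMap.add_apply, ContinuousLinearMap.sub_apply,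
        ContinuousLinearMap.smul_apply, ContinuousLinearMap.proj_apply,
        Pi.single_apply, smul_eq_mul] <;> (try field_simp) <;> (try ring)
  · show fderiv ℝ (P2 2 1) y (Pi.single a 1) = P3 a 2 1 y
    have hD := ((((h0.const_mul (1/2)).sub ((h1.const_mul (1/12)).mul h2)).add (((hasDerivAt_pow 4 (y 2)).comp_hasFDerivAt y h2).const_mul (1/288))).add h3.exp).sub ((((hasDerivAt_pow 2 (y 1)).comp_hasFDerivAt y h1).const_mul (1/16)).mul hinv2)
    have hDF := hD.congr_of_eventuallyEq (f₁ := P2 2 1)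
      (Filter.Eventually.of_forall fun t => by simp [P2, Q2])
    rw [hDF.fderiv]
    fin_cases a <;>
      simp [P3, Q3, ContinuousLinearMap.add_apply, ContinuousLinearMap.sub_apply,
        ContinuousLinearMap.smul_apply, ContinuousLinearMap.proj_apply,
        Pi.single_apply, smul_eq_mul] <;> (try field_simp) <;> (try ring)
  · show fderiv ℝ (P2 2 2) y (Pi.single a 1) = P3 a 2 2 y
    have hD := ((((((hasDerivAt_pow 2 (y 1)).comp_hasFDerivAt y h1).const_mul (-(1/24))).add ((h1.const_mul (1/72)).mul ((hasDerivAt_pow 3 (y 2)).comp_hasFDerivAt y h2))).sub (((hasDerivAt_pow 6 (y 2)).comp_hasFDerivAt y h2).const_mul (1/648))).add ((((hasDerivAt_pow 2 (y 2)).comp_hasFDerivAt y h2).const_mul 2).mul h3.exp)).add ((((hasDerivAt_pow 3 (y 1)).comp_hasFDerivAt y h1).const_mul (1/24)).mul hinv3)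
    have hDF := hD.congr_of_eventuallyEq (f₁ := P2 2 2)
      (Filter.Eventually.of_forall fun t => by simp [P2, Q2])
    rw [hDF.fderiv]
    fin_cases a <;>
      simp [P3, Q3, ContinuousLinearMap.add_apply, ContinuousLinearMap.sub_apply,
        ContinuousLinearMap.smul_apply, ContinuousLinearMap.proj_apply,
        Pi.single_apply, smul_eq_mul] <;> (try field_simp) <;> (try ring)
  · show fderiv ℝ (P2 2 3) y (Pi.single a 1) = P3 a 2 3 y
    have hD := (h1.mul h3.exp).add ((((hasDerivAt_pow 3 (y 2)).comp_hasFDerivAt y h2).const_mul (2/3)).mul h3.exp)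
    have hDF := hD.congr_of_eventuallyEq (f₁ := P2 2 3)
      (Filter.Eventually.of_forall fun t => by simp [P2, Q2])
    rw [hDF.fderiv]
    fin_cases a <;>
      simp [P3, Q3, ContinuousLinearMap.add_apply, ContinuousLinearMap.sub_apply,
        ContinuousLinearMap.smul_apply, ContinuousLinearMap.proj_apply,
        Pi.single_apply, smul_eq_mul] <;> (try field_simp) <;> (try ring)
  · show fderiv ℝ (P2 3 0) y (Pi.single a 1) = P3 a 3 0 y
    have hD := h0
    have hDF := hD.congr_of_eventuallyEq (f₁ := P2 3 0)
      (Filter.Eventually.of_forall fun t => by simp [P2, Q2])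
    rw [hDF.fderiv]
    fin_cases a <;>
      simp [P3, Q3, ContinuousLinearMap.add_apply, ContinuousLinearMap.sub_apply,
        ContinuousLinearMap.smul_apply, ContinuousLinearMap.proj_apply,
        Pi.single_apply, smul_eq_mul] <;> (try field_simp) <;> (try ring)
  · show fderiv ℝ (P2 3 1) y (Pi.single a 1) = P3 a 3 1 y
    have hD := h2.mul h3.exp
    have hDF := hD.congr_of_eventuallyEq (f₁ := P2 3 1)
      (Filter.Eventually.of_forall fun t => by simp [P2, Q2])
    rw [hDF.fderiv]
    fin_cases a <;>
      simp [P3, Q3, ContinuousLinearMap.add_apply, ContinuousLinearMap.sub_apply,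
        ContinuousLinearMap.smul_apply, ContinuousLinearMap.proj_apply,
        Pi.single_apply, smul_eq_mul] <;> (try field_simp) <;> (try ring)
  · show fderiv ℝ (P2 3 2) y (Pi.single a 1) = P3 a 3 2 y
    have hD := (h1.mul h3.exp).add ((((hasDerivAt_pow 3 (y 2)).comp_hasFDerivAt y h2).const_mul (2/3)).mul h3.exp)
    have hDF := hD.congr_of_eventuallyEq (f₁ := P2 3 2)
      (Filter.Eventually.of_forall fun t => by simp [P2, Q2])
    rw [hDF.fderiv]
    fin_cases a <;>
      simp [P3, Q3, ContinuousLinearMap.add_apply, ContinuousLinearMap.sub_apply,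
        ContinuousLinearMap.smul_apply, ContinuousLinearMap.proj_apply,
        Pi.single_apply, smul_eq_mul] <;> (try field_simp) <;> (try ring)
  · show fderiv ℝ (P2 3 3) y (Pi.single a 1) = P3 a 3 3 y
    have hD := (((h1.mul h2).mul h3.exp).add ((((hasDerivAt_pow 4 (y 2)).comp_hasFDerivAt y h2).const_mul (1/6)).mul h3.exp)).add (((hasDerivAt_pow 2 (Real.exp (y 3))).comp_hasFDerivAt y h3.exp).const_mul 2)
    have hDF := hD.congr_of_eventuallyEq (f₁ := P2 3 3)
      (Filter.Eventually.of_forall fun t => by simp [P2, Q2])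
    rw [hDF.fderiv]
    fin_cases a <;>
      simp [P3, Q3, ContinuousLinearMap.add_apply, ContinuousLinearMap.sub_apply,
        ContinuousLinearMap.smul_apply, ContinuousLinearMap.proj_apply,
        Pi.single_apply, smul_eq_mul] <;> (try field_simp) <;> (try ring)

lemma LC (t : Fin 4 → ℝ) (h : t 2 ≠ 0) (a b c : Fin 4) :
    iteratedFDeriv ℝ 3 F3v t ![Pi.single a 1, Pi.single b 1, Pi.single c 1] = P3 a b c t := by
  rw [iteratedFDeriv_succ_apply_right, iteratedFDeriv_two_apply]
  show fderiv ℝ (fderiv ℝ (fderiv ℝ F3v)) t (Pi.single a 1) (Pi.single b 1) (Pi.single c 1) = _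
  exact L3 t h a b c

/-- the WDVV associativity equations for the potential of `W̃^{(1)}(C_3)`;
`(η^{λμ})` is the inverse metric, with nonzero entries `η^{14} = η^{41} = 1`,
`η^{23} = η^{32} = 2`. -/
theorem stmt15 (t : Fin 4 → ℝ) (h : t 2 ≠ 0) (i j k m : Fin 4) :
    let e : Fin 4 → (Fin 4 → ℝ) := fun a => Pi.single a 1
    let C : Fin 4 → Fin 4 → Fin 4 → ℝ := fun a b c =>
      iteratedFDeriv ℝ 3 F3v t ![e a, e b, e c]
    let ηinv : Matrix (Fin 4) (Fin 4) ℝ :=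
      !![0, 0, 0, 1; 0, 0, 2, 0; 0, 2, 0, 0; 1, 0, 0, 0]
    ∑ lam, ∑ mu, C i j lam * ηinv lam mu * C mu k m
      = ∑ lam, ∑ mu, C k j lam * ηinv lam mu * C mu i m := by
  intro e C ηinv
  have hC : ∀ a b c : Fin 4, C a b c = P3 a b c t := fun a b c => LC t h a b c
  have hη : ηinv = !![0, 0, 0, 1; 0, 0, 2, 0; 0, 2, 0, 0; 1, 0, 0, 0] := rfl
  simp only [hC, hη, Fin.sum_univ_four, Matrix.cons_val', Matrix.cons_val_zero,
    Matrix.cons_val_one, Matrix.head_cons, Matrix.empty_val', Matrix.cons_val_fin_one,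
    Matrix.head_fin_const, Matrix.cons_val_two, Matrix.cons_val_three, Matrix.tail_cons,
    mul_zero, zero_mul, add_zero, zero_add, mul_one]
  fin_cases i <;> fin_cases j <;> fin_cases k <;> fin_cases m <;>
    simp [P3, Q3, Matrix.vecHead, Matrix.vecTail] <;> (try field_simp) <;> (try ring)
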